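/- Let V_1 be the (l+1)-dimensional irreducible U_q(sl_2)-module with lower crystal lattice L_1 = ⊕_{k=0}^{l} A_0 f^{(k)} v_1, and V_2 the q-boson Fock module with lattice L_2 = ⊕_{k ≥ 0} A_0 f^{(k)} v_2. For s ≤ l − t (with 0 ≤ t ≤ l, s ≥ 0): Δ_B(f^{(s)}) E_t ≡ f^{(s)} v_1 ⊗ f^{(t)} v_2 (mod q L_1 ⊗ L_2), where E_t = ∑_{i=0}^{t} a_{t,i}(q) f^{(i)}v_1 ⊗ f^{(t−i)}v_2. -/

import Mathlib

noncomputable section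

/-- The field `ℚ(q)` of rational functions. -/
abbrev K : Type := RatFunc ℚ

/-- The indeterminate `q`. -/
def q : K := RatFunc.X

/-- The balanced quantum integer `[k] = (q^k - q^{-k})/(q - q⁻¹)`. -/
def qint (k : ℤ) : K := (q ^ k - q ^ (-k)) / (q - q⁻¹)

/-- The quantum factorial `[k]! = [1][2]⋯[k]`. -/
def qfact : ℕ → K
  | 0 => 1
  | k + 1 => qfact k * qint ((k : ℤ) + 1)

/-- The Gaussian binomial coefficient `[c choose d] = [c]!/([c-d]![d]!)` for `c ≥ d ≥ 0`,
and `0` otherwise. -/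
def qbinom (c d : ℤ) : K :=
  if d ≤ c ∧ 0 ≤ d then qfact c.toNat / (qfact (c - d).toNat * qfact d.toNat) else 0

/-- The coefficient `a_{t,i}(q) = ∏_{0 ≤ j ≤ i−1} q^{l−t+1}/(q^{2(l−j)} − 1)`,
with `a_{t,0} = 1`. -/
def att (l t i : ℕ) : K :=
  ∏ j ∈ Finset.range i, q ^ ((l : ℤ) - t + 1) / (q ^ (2 * ((l : ℤ) - j)) - 1)

/-- The vector `E_t = ∑_{i=0}^{t} a_{t,i}(q) f^{(i)}v₁ ⊗ f^{(t−i)}v₂` in `V₁ ⊗ V₂`,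
where the basis vector `f^{(i)}v₁ ⊗ f^{(j)}v₂` is encoded as `single (i, j)`. -/
def Etvec (l t : ℕ) : (ℕ × ℕ) →₀ K :=
  ∑ i ∈ Finset.range (t + 1), Finsupp.single (i, t - i) (att l t i)

/-- The action of `Δ_B(f) = f ⊗ 1 + k ⊗ f` on `V₁ ⊗ V₂`, where on the `(l+1)`-dimensional
module `V₁`: `f f^{(i)}v₁ = [i+1] f^{(i+1)}v₁` (zero for `i = l`), `k f^{(i)}v₁ =
q^{l−2i} f^{(i)}v₁`, and on the `q`-boson module `V₂`: `f f^{(j)}v₂ = [j+1] f^{(j+1)}v₂`. -/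
def deltaF (l : ℕ) (v : (ℕ × ℕ) →₀ K) : (ℕ × ℕ) →₀ K :=
  v.sum fun p c =>
    (if p.1 < l then Finsupp.single (p.1 + 1, p.2) (c * qint ((p.1 : ℤ) + 1)) else 0)
    + Finsupp.single (p.1, p.2 + 1) (c * (q ^ ((l : ℤ) - 2 * (p.1 : ℤ)) * qint ((p.2 : ℤ) + 1)))

/-- `A₀ ⊂ ℚ(q)`: the subring of rational functions regular at `q = 0`. -/
def inA0 (f : K) : Prop :=
  ∃ p r : Polynomial ℚ, r.coeff 0 ≠ 0 ∧
    f = algebraMap (Polynomial ℚ) K p / algebraMap (Polynomial ℚ) K r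

/-!
Put `w_s = Δ_B(f)^s E_t / [s]!`, so that `w_{s+1} = [s+1]⁻¹ Δ_B(f) w_s`. The operator `Δ_B(f)`
raises the total degree `a + b` of `f^{(a)}v₁ ⊗ f^{(b)}v₂` by one, multiplying the coefficient by
`[a]` or `q^{l-2a}[b]`, and `[a]/[b] ∈ q^{b-a} A₀` for `b ≥ 1`. So induction on `s` bounds the
`q`-order of the coefficient at `(a, s + t - a)` of `w_s` from below by a quadratic `φ(a)` with
`φ(s) = 0` and, as long as `s + t ≤ l`, `φ(a) ≥ 1` for `a ≠ s`; the coefficient at `(s, t)` stays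
`≡ 1 mod q`.
-/

open Polynomial

lemma q_ne_zero : q ≠ 0 := RatFunc.X_ne_zero

lemma one_sub_q_pow_eq (n : ℕ) : 1 - q ^ n = algebraMap ℚ[X] K (1 - X ^ n) := by
  simp [q, RatFunc.algebraMap_X]

lemma coeff_zero_one_sub_X_pow {n : ℕ} (hn : n ≠ 0) : (1 - X ^ n : ℚ[X]).coeff 0 = 1 := by
  simp [coeff_X_pow, Ne.symm hn]

lemma one_sub_q_pow_ne_zero {n : ℕ} (hn : n ≠ 0) : 1 - q ^ n ≠ 0 := by
  rw [one_sub_q_pow_eq]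
  refine RatFunc.algebraMap_ne_zero fun h => ?_
  simpa [h] using coeff_zero_one_sub_X_pow hn

lemma algebraMap_ne_zero_of_coeff_zero_ne_zero {r : ℚ[X]} (hr : r.coeff 0 ≠ 0) :
    algebraMap ℚ[X] K r ≠ 0 :=
  RatFunc.algebraMap_ne_zero fun h => hr (by simp [h])

def A0 : Subring K where
  carrier := {f | inA0 f}
  zero_mem' := ⟨0, 1, by simp, by simp⟩
  one_mem' := ⟨1, 1, by simp, by simp⟩
  add_mem' := by
    rintro _ _ ⟨p₁, r₁, h₁, rfl⟩ ⟨p₂, r₂, h₂, rfl⟩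
    refine ⟨p₁ * r₂ + r₁ * p₂, r₁ * r₂, by simpa [mul_coeff_zero] using mul_ne_zero h₁ h₂, ?_⟩
    rw [div_add_div _ _ (algebraMap_ne_zero_of_coeff_zero_ne_zero h₁)
      (algebraMap_ne_zero_of_coeff_zero_ne_zero h₂)]
    simp only [map_add, map_mul]
  mul_mem' := by
    rintro _ _ ⟨p₁, r₁, h₁, rfl⟩ ⟨p₂, r₂, h₂, rfl⟩
    refine ⟨p₁ * p₂, r₁ * r₂, by simpa [mul_coeff_zero] using mul_ne_zero h₁ h₂, ?_⟩
    rw [div_mul_div_comm, map_mul, map_mul]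
  neg_mem' := by
    rintro _ ⟨p, r, h, rfl⟩
    exact ⟨-p, r, h, by rw [map_neg, neg_div]⟩

lemma q_mem_A0 : q ∈ A0 := ⟨X, 1, by simp, by simp [q, RatFunc.algebraMap_X]⟩

lemma inv_one_sub_q_pow_mem_A0 {n : ℕ} (hn : n ≠ 0) : (1 - q ^ n)⁻¹ ∈ A0 :=
  ⟨1, 1 - X ^ n, by rw [coeff_zero_one_sub_X_pow hn]; exact one_ne_zero,
    by rw [one_sub_q_pow_eq, map_one, one_div]⟩

lemma one_sub_q_pow_mem_A0 (n : ℕ) : 1 - q ^ n ∈ A0 :=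
  A0.sub_mem A0.one_mem (A0.pow_mem q_mem_A0 n)

def VanishesToOrder (n : ℤ) (f : K) : Prop := q ^ (-n) * f ∈ A0

namespace VanishesToOrder

variable {m n : ℤ} {f g : K}

lemma zero (n : ℤ) : VanishesToOrder n 0 := by
  rw [VanishesToOrder, mul_zero]
  exact A0.zero_mem

lemma zpow (n : ℤ) : VanishesToOrder n (q ^ n) := by
  rw [VanishesToOrder, ← zpow_add₀ q_ne_zero, neg_add_cancel, zpow_zero]
  exact A0.one_mem

lemma add (hf : VanishesToOrder n f) (hg : VanishesToOrder n g) : VanishesToOrder n (f + g) := by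
  simpa [VanishesToOrder, mul_add] using A0.add_mem hf hg

lemma mul (hf : VanishesToOrder m f) (hg : VanishesToOrder n g) :
    VanishesToOrder (m + n) (f * g) := by
  have := A0.mul_mem hf hg
  rwa [mul_mul_mul_comm, ← zpow_add₀ q_ne_zero, ← neg_add] at this

lemma mul_mem_A0 (hf : VanishesToOrder n f) (hg : g ∈ A0) : VanishesToOrder n (f * g) := by
  rw [VanishesToOrder, ← mul_assoc]
  exact A0.mul_mem hf hg

lemma mono (hf : VanishesToOrder n f) (h : m ≤ n) : VanishesToOrder m f := by
  obtain ⟨k, rfl⟩ : ∃ k : ℕ, n = m + k := ⟨(n - m).toNat, by omega⟩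
  have := A0.mul_mem (A0.pow_mem q_mem_A0 k) hf
  rwa [← zpow_natCast, ← mul_assoc, ← zpow_add₀ q_ne_zero,
    show (k : ℤ) + -(m + k) = -m by ring] at this

lemma ite_zero {c : Prop} [Decidable c] (h : c → VanishesToOrder n f) :
    VanishesToOrder n (if c then f else 0) := by
  split_ifs with hc
  exacts [h hc, zero n]

lemma prod {ι : Type*} {s : Finset ι} {n : ι → ℤ} {f : ι → K}
    (h : ∀ i ∈ s, VanishesToOrder (n i) (f i)) :
    VanishesToOrder (∑ i ∈ s, n i) (∏ i ∈ s, f i) := by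
  classical
  induction s using Finset.induction_on with
  | empty => simp [VanishesToOrder]
  | insert i s hi ih =>
    rw [Finset.sum_insert hi, Finset.prod_insert hi]
    exact (h i (Finset.mem_insert_self i s)).mul (ih fun j hj => h j (Finset.mem_insert_of_mem hj))

end VanishesToOrder

lemma q_sub_q_inv_ne_zero : q - q⁻¹ ≠ 0 := by
  have h : q - q⁻¹ = -(q⁻¹ * (1 - q ^ 2)) := by field_simp [q_ne_zero]; ring
  rw [h, neg_ne_zero]
  exact mul_ne_zero (inv_ne_zero q_ne_zero) (one_sub_q_pow_ne_zero two_ne_zero)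

lemma qint_natCast_mul (n : ℕ) : qint n * (q - q⁻¹) = -(q ^ (-(n : ℤ)) * (1 - q ^ (2 * n))) := by
  rw [qint, div_mul_cancel₀ _ q_sub_q_inv_ne_zero, zpow_neg, zpow_natCast]
  field_simp [q_ne_zero]
  ring

lemma qint_natCast_ne_zero {n : ℕ} (hn : n ≠ 0) : qint n ≠ 0 := by
  intro h
  have := qint_natCast_mul n
  rw [h, zero_mul, eq_comm, neg_eq_zero] at this
  exact mul_ne_zero (zpow_ne_zero _ q_ne_zero) (one_sub_q_pow_ne_zero (by omega)) this

lemma qint_div_qint (a : ℕ) {b : ℕ} (hb : b ≠ 0) :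
    qint a / qint b = q ^ ((b : ℤ) - a) * ((1 - q ^ (2 * a)) * (1 - q ^ (2 * b))⁻¹) := by
  rw [← mul_div_mul_right _ _ q_sub_q_inv_ne_zero, qint_natCast_mul, qint_natCast_mul,
    neg_div_neg_eq, zpow_sub₀ q_ne_zero, zpow_neg, zpow_neg]
  have := one_sub_q_pow_ne_zero (n := 2 * b) (by omega)
  field_simp [q_ne_zero]

lemma vanishesToOrder_qint_div (a : ℕ) {b : ℕ} (hb : b ≠ 0) :
    VanishesToOrder (b - a) (qint a / qint b) := by
  rw [qint_div_qint a hb]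
  exact (VanishesToOrder.zpow _).mul_mem_A0
    (A0.mul_mem (one_sub_q_pow_mem_A0 _) (inv_one_sub_q_pow_mem_A0 (by omega)))

lemma vanishesToOrder_att {l i : ℕ} (t : ℕ) (hi : i ≤ l) :
    VanishesToOrder (i * ((l : ℤ) - t + 1)) (att l t i) := by
  have hfactor : ∀ j ∈ Finset.range i, VanishesToOrder ((l : ℤ) - t + 1)
      (q ^ ((l : ℤ) - t + 1) / (q ^ (2 * ((l : ℤ) - j)) - 1)) := by
    intro j hj
    have hjl : j < l := by rw [Finset.mem_range] at hj; omega
    rw [show 2 * ((l : ℤ) - j) = ((2 * (l - j) : ℕ) : ℤ) by omega, zpow_natCast,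
      show q ^ (2 * (l - j)) - 1 = -(1 - q ^ (2 * (l - j))) by ring, div_eq_mul_inv, inv_neg]
    exact (VanishesToOrder.zpow _).mul_mem_A0 (A0.neg_mem (inv_one_sub_q_pow_mem_A0 (by omega)))
  simpa only [att, Finset.sum_const, Finset.card_range, nsmul_eq_mul] using
    VanishesToOrder.prod hfactor

lemma Etvec_apply (l t a b : ℕ) : Etvec l t (a, b) = if a + b = t then att l t a else 0 := by
  rw [Etvec, Finsupp.finsetSum_apply]
  by_cases ha : a ≤ t
  · rw [Finset.sum_eq_single_of_mem a (by simp; omega) fun i _ hia => by simp [hia]]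
    simp only [Finsupp.single_apply, Prod.mk.injEq, true_and, show t - a = b ↔ a + b = t by omega]
  · rw [if_neg (by omega)]
    refine Finset.sum_eq_zero fun i hi => ?_
    rw [Finset.mem_range] at hi
    simp [Finsupp.single_apply]
    omega

lemma deltaF_apply (l : ℕ) (w : (ℕ × ℕ) →₀ K) (a b : ℕ) :
    deltaF l w (a, b)
      = (if 1 ≤ a ∧ a ≤ l then w (a - 1, b) * qint a else 0)
        + (if 1 ≤ b then w (a, b - 1) * (q ^ ((l : ℤ) - 2 * a) * qint b) else 0) := by
  rw [deltaF, Finsupp.sum_apply]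
  simp only [Finsupp.add_apply]
  rw [Finsupp.sum_add]
  congr 1
  · rw [Finsupp.sum_eq_single (a - 1, b)]
    · by_cases ha : 1 ≤ a ∧ a ≤ l
      · rw [if_pos ha, if_pos (by dsimp; omega), Finsupp.single_apply, if_pos (by simp; omega)]
        push_cast [ha.1]
        ring_nf
      · split_ifs <;> simp_all [Finsupp.single_apply]
        omega
    · rintro ⟨i, j⟩ _ hij
      rw [Ne, Prod.ext_iff] at hij
      split_ifs <;> simp [Finsupp.single_apply]
      omega
    · intro _
      split_ifs <;> simp
  · rw [Finsupp.sum_eq_single (a, b - 1)]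
    · by_cases hb : 1 ≤ b
      · rw [if_pos hb, Finsupp.single_apply, if_pos (by simp; omega)]
        push_cast [hb]
        ring_nf
      · simp [Finsupp.single_apply, hb]
        omega
    · rintro ⟨i, j⟩ _ hij
      rw [Ne, Prod.ext_iff] at hij
      simp [Finsupp.single_apply]
      omega
    · intro _
      simp

lemma deltaF_smul (l : ℕ) (c : K) (w : (ℕ × ℕ) →₀ K) : deltaF l (c • w) = c • deltaF l w := by
  ext ⟨a, b⟩
  simp only [deltaF_apply, Finsupp.smul_apply, smul_eq_mul]
  split_ifs <;> ring

lemma inv_qfact_smul_iterate_deltaF_succ (l s : ℕ) (w : (ℕ × ℕ) →₀ K) :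
    (qfact (s + 1))⁻¹ • (deltaF l)^[s + 1] w
      = (qint ((s : ℤ) + 1))⁻¹ • deltaF l ((qfact s)⁻¹ • (deltaF l)^[s] w) := by
  rw [Function.iterate_succ_apply', deltaF_smul, smul_smul, qfact, mul_inv, mul_comm]

lemma inv_qint_smul_deltaF_apply (l s : ℕ) (w : (ℕ × ℕ) →₀ K) (a b : ℕ) :
    ((qint ((s : ℤ) + 1))⁻¹ • deltaF l w) (a, b)
      = (if 1 ≤ a ∧ a ≤ l then w (a - 1, b) * (qint a / qint (s + 1 : ℕ)) else 0)
        + (if 1 ≤ b then w (a, b - 1) * (q ^ ((l : ℤ) - 2 * a) * (qint b / qint (s + 1 : ℕ)))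
          else 0) := by
  rw [Finsupp.smul_apply, deltaF_apply, smul_eq_mul]
  push_cast
  split_ifs <;> ring

/-- In the expansion of `Δ_B(f^{(s)}) E_t` over `(i, j)`, the coefficient of
`f^{(a)}v₁ ⊗ f^{(s+t-a)}v₂` collects the summands with `i - j = a - s`; this is the `q`-order of
the one with `j = 0` (if `a ≥ s`), resp. `i = 0` (if `a < s`). -/
def orderBound (l t s a : ℕ) : ℤ :=
  if s ≤ a then ((a : ℤ) - s) * ((l : ℤ) - s - t + 1) else ((s : ℤ) - a) * ((l : ℤ) - t - a)

section orderBound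

variable {l t s : ℕ}

lemma one_le_orderBound (hs : s + t ≤ l) {a : ℕ} (ha : a ≠ s) : 1 ≤ orderBound l t s a := by
  unfold orderBound
  split_ifs with h
  · have h₁ : (1 : ℤ) ≤ a - s := by omega
    have h₂ : (1 : ℤ) ≤ l - s - t + 1 := by omega
    nlinarith
  · have h₁ : (1 : ℤ) ≤ s - a := by omega
    have h₂ : (1 : ℤ) ≤ l - t - a := by omega
    nlinarith

lemma orderBound_succ_le_of_fst {a : ℕ} (ha : 1 ≤ a) :
    orderBound l t (s + 1) a ≤ orderBound l t s (a - 1) + ((s + 1 : ℕ) - a) := by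
  obtain ⟨a, rfl⟩ : ∃ a', a = a' + 1 := ⟨a - 1, by omega⟩
  simp only [orderBound, Nat.add_sub_cancel]
  split_ifs <;> push_cast <;> nlinarith

lemma orderBound_succ_le_of_snd (hs : s + t ≤ l) (a : ℕ) :
    orderBound l t (s + 1) a ≤ orderBound l t s a + ((l : ℤ) - a - t) := by
  simp only [orderBound]
  split_ifs <;> push_cast <;> nlinarith

end orderBound

structure CoeffBounds (l t s : ℕ) (w : (ℕ × ℕ) →₀ K) : Prop where
  eq_zero : ∀ a b, a + b ≠ s + t → w (a, b) = 0
  vanishesToOrder : ∀ a b, VanishesToOrder (orderBound l t s a) (w (a, b))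
  leading : VanishesToOrder 1 (w (s, t) - 1)

lemma coeffBounds_Etvec {l t : ℕ} (ht : t ≤ l) : CoeffBounds l t 0 (Etvec l t) where
  eq_zero a b hab := by rw [Etvec_apply, if_neg (by omega)]
  vanishesToOrder a b := by
    rw [Etvec_apply, show orderBound l t 0 a = a * ((l : ℤ) - t + 1) by simp [orderBound]]
    exact VanishesToOrder.ite_zero fun hab => vanishesToOrder_att t (by omega)
  leading := by simpa [Etvec_apply, att] using VanishesToOrder.zero 1

namespace CoeffBounds

variable {l t s : ℕ} {w : (ℕ × ℕ) →₀ K}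

lemma vanishesToOrder_fst_term (h : CoeffBounds l t s w) (a b : ℕ) :
    VanishesToOrder (orderBound l t (s + 1) a)
      (if 1 ≤ a ∧ a ≤ l then w (a - 1, b) * (qint a / qint (s + 1 : ℕ)) else 0) :=
  VanishesToOrder.ite_zero fun ha =>
    ((h.vanishesToOrder (a - 1) b).mul (vanishesToOrder_qint_div a s.succ_ne_zero)).mono
      (orderBound_succ_le_of_fst ha.1)

lemma vanishesToOrder_snd_term (h : CoeffBounds l t s w) {a b : ℕ} (hab : a + b = s + 1 + t) :
    VanishesToOrder (orderBound l t s a + ((l : ℤ) - a - t))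
      (if 1 ≤ b then w (a, b - 1) * (q ^ ((l : ℤ) - 2 * a) * (qint b / qint (s + 1 : ℕ)))
        else 0) :=
  VanishesToOrder.ite_zero fun _ =>
    ((h.vanishesToOrder a (b - 1)).mul
      ((VanishesToOrder.zpow _).mul (vanishesToOrder_qint_div b s.succ_ne_zero))).mono
      (by omega)

lemma succ (h : CoeffBounds l t s w) (hs : s + 1 + t ≤ l) :
    CoeffBounds l t (s + 1) ((qint ((s : ℤ) + 1))⁻¹ • deltaF l w) := by
  have eq_zero : ∀ a b, a + b ≠ s + 1 + t → ((qint ((s : ℤ) + 1))⁻¹ • deltaF l w) (a, b) = 0 := by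
    intro a b hab
    rw [inv_qint_smul_deltaF_apply,
      ite_eq_right_iff.2 fun _ => by rw [h.eq_zero _ _ (by omega), zero_mul],
      ite_eq_right_iff.2 fun _ => by rw [h.eq_zero _ _ (by omega), zero_mul], add_zero]
  refine ⟨eq_zero, fun a b => ?_, ?_⟩
  · by_cases hab : a + b = s + 1 + t
    · rw [inv_qint_smul_deltaF_apply]
      exact (h.vanishesToOrder_fst_term a b).add ((h.vanishesToOrder_snd_term hab).mono
        (orderBound_succ_le_of_snd (by omega) a))
    · rw [eq_zero a b hab]
      exact VanishesToOrder.zero _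
  · have hpos : 1 ≤ orderBound l t s (s + 1) := one_le_orderBound (by omega) s.succ_ne_self
    have hsnd := (h.vanishesToOrder_snd_term (a := s + 1) (b := t) rfl).mono (m := 1) (by omega)
    rw [inv_qint_smul_deltaF_apply, if_pos ⟨by omega, by omega⟩, Nat.add_sub_cancel,
      div_self (qint_natCast_ne_zero s.succ_ne_zero), mul_one, add_sub_right_comm]
    exact h.leading.add hsnd

end CoeffBounds

lemma coeffBounds_inv_qfact_smul_iterate_deltaF {l t s : ℕ} (hs : s + t ≤ l) :
    CoeffBounds l t s ((qfact s)⁻¹ • (deltaF l)^[s] (Etvec l t)) := by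
  induction s with
  | zero => simpa [qfact] using coeffBounds_Etvec (by omega)
  | succ s ih =>
    rw [inv_qfact_smul_iterate_deltaF_succ]
    exact (ih (by omega)).succ hs

lemma CoeffBounds.vanishesToOrder_sub_single {l t s : ℕ} {w : (ℕ × ℕ) →₀ K}
    (h : CoeffBounds l t s w) (hs : s + t ≤ l) (p : ℕ × ℕ) :
    VanishesToOrder 1 ((w - Finsupp.single (s, t) (1 : K)) p) := by
  obtain ⟨a, b⟩ := p
  rw [Finsupp.sub_apply, Finsupp.single_apply]
  split_ifs with hp
  · rw [← hp]
    exact h.leading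
  · rw [sub_zero]
    by_cases hab : a + b = s + t
    · exact (h.vanishesToOrder a b).mono (one_le_orderBound hs fun ha => hp (by ext <;> omega))
    · rw [h.eq_zero a b hab]
      exact VanishesToOrder.zero 1

/-- Here `L₁ ⊗ L₂` is the `A₀`-span of the vectors `single (i, j)`, and
`Δ_B(f^{(s)}) = Δ_B(f)^s/[s]!`. -/
theorem deltaF_divided_power_Etvec_general (l t s : ℕ) (hs : s + t ≤ l) :
    ∃ v : (ℕ × ℕ) →₀ K, (∀ p : ℕ × ℕ, inA0 (v p)) ∧
      (qfact s)⁻¹ • (deltaF l)^[s] (Etvec l t)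
        = Finsupp.single (s, t) 1 + q • v := by
  set w := (qfact s)⁻¹ • (deltaF l)^[s] (Etvec l t)
  refine ⟨q⁻¹ • (w - Finsupp.single (s, t) 1), fun p => ?_, ?_⟩
  · have := (coeffBounds_inv_qfact_smul_iterate_deltaF hs).vanishesToOrder_sub_single hs p
    rwa [VanishesToOrder, zpow_neg_one, ← smul_eq_mul, ← Finsupp.smul_apply] at this
  · rw [smul_smul, mul_inv_cancel₀ q_ne_zero, one_smul, add_sub_cancel]

/-- For `0 ≤ t ≤ l` and `0 ≤ s ≤ l − t`:
`Δ_B(f^{(s)}) E_t ≡ f^{(s)} v₁ ⊗ f^{(t)} v₂ (mod q L₁ ⊗ L₂)`, where `L₁ ⊗ L₂` is the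
`A₀`-lattice spanned by the vectors `f^{(i)}v₁ ⊗ f^{(j)}v₂` and
`Δ_B(f^{(s)}) = Δ_B(f)^s/[s]!`. -/
theorem deltaF_divided_power_Etvec (l t s : ℕ) (ht : t ≤ l) (hs : s + t ≤ l) :
    ∃ v : (ℕ × ℕ) →₀ K, (∀ p : ℕ × ℕ, inA0 (v p)) ∧
      (qfact s)⁻¹ • (deltaF l)^[s] (Etvec l t)
        = Finsupp.single (s, t) 1 + q • v :=
  deltaF_divided_power_Etvec_general l t s hs

end
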